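/- Let f be a positive reduced ternary quadratic polynomial, let μ₁ ≤ μ₂ ≤ μ₃ be the successive minima of its quadratic part, and let a = (a₁,a₂,a₃) ∈ ℤ³. If it is not the case that |a₁| ≤ 30, |a₂| ≤ 21 and |a₃| ≤ 8, then f(a) ≥ min{(3/2)μ₃, (7/2)μ₂, 31μ₁}. -/

import Mathlib

noncomputable section

open Matrix

/-- A ternary quadratic polynomial over `ℚ`:
`f(x) = Q(x) + ℓ(x) + m` where `Q(x) = xᵀAx` for a symmetric matrix `A`,
`ℓ(x) = b ⬝ x` is a linear form and `m` is a constant. -/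
structure QuadPoly3 where
  A : Matrix (Fin 3) (Fin 3) ℚ
  hA : A.IsSymm
  b : Fin 3 → ℚ
  m : ℚ

namespace QuadPoly3

/-- Evaluation of the quadratic polynomial at a rational point. -/
def eval (f : QuadPoly3) (x : Fin 3 → ℚ) : ℚ :=
  x ⬝ᵥ f.A.mulVec x + f.b ⬝ᵥ x + f.m

/-- The quadratic part evaluated at a rational point. -/
def evalQ (f : QuadPoly3) (x : Fin 3 → ℚ) : ℚ := x ⬝ᵥ f.A.mulVec x

/-- `f` is positive: its quadratic part is positive definite and the minimum of `f`
on `ℤ³` is nonnegative. -/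
def Positive (f : QuadPoly3) : Prop :=
  f.A.PosDef ∧ ∀ x : Fin 3 → ℤ, 0 ≤ f.eval (fun i => (x i : ℚ))

/-- The quadratic part of `f` is Minkowski reduced: for each `i`, `Q(eᵢ) ≤ Q(x)` for every
integer vector `x` whose coordinates `xᵢ, …, xₙ` have gcd `1`. -/
def MinkowskiReducedQ (f : QuadPoly3) : Prop :=
  ∀ (i : Fin 3) (x : Fin 3 → ℤ),
    (Finset.univ.filter fun j => i ≤ j).gcd x = 1 →
      f.A i i ≤ f.evalQ (fun j => (x j : ℚ))

/-- `f` is (Minkowski) reduced: its quadratic part is Minkowski reduced and `f` attains its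
minimum over `ℤ³` at the zero vector.  For such `f` the successive minima of the quadratic
part are the diagonal entries `μ₁ = A 0 0 ≤ μ₂ = A 1 1 ≤ μ₃ = A 2 2`. -/
def Reduced (f : QuadPoly3) : Prop :=
  f.MinkowskiReducedQ ∧ ∀ x : Fin 3 → ℤ, f.eval 0 ≤ f.eval (fun i => (x i : ℚ))

end QuadPoly3

/-!
Write `Q` for the quadratic part, `ℓ` for the linear part and `μ₁ ≤ μ₂ ≤ μ₃` for the diagonal
of `Q`. Minimality of `f` at `0` gives `ℓ(y) ≥ -Q(y)` on `ℤ³`. If `z ≡ a (mod 2)`, put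
`w = (a + z)/2` and `y = (a - z)/2`; then `f(w) ≥ 0`, `ℓ(y) ≥ -Q(y)` and the parallelogram law
`Q(w + y) + Q(w - y) = 2 Q(w) + 2 Q(y)` give `2 f(a) ≥ Q(a) - Q(z)`.

* `|a₃| ≥ 9`: Minkowski's inequalities bound the determinant, `9 det Q ≥ μ₃ (μ₁μ₂ - A₁₂²)`, so
  `Q(a) ≥ μ₃ a₃² / 9 ≥ 9 μ₃`, while `Q(z) ≤ 6 μ₃` for `z = a mod 2`.
* `|a₂| ≥ 22`, `|a₃| ≤ 8`: with `z = (a₁ mod 2, a₂ mod 2, a₃)` the `μ₃`-terms cancel and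
  `Q(a) - Q(z) ≥ 7 μ₂`.
* Otherwise `|a₁| ≥ 31`, and `f(a) = f(0, a₂, a₃) + μ₁a₁² + 2a₁(A₁₂a₂ + A₁₃a₃) + ℓ(a₁e₁)`
  is at least `μ₁|a₁|(|a₁| - |a₂| - |a₃| - 1) ≥ 31 μ₁`.
-/

section OrderedField

variable {K : Type*} [Field K] [LinearOrder K] [IsStrictOrderedRing K]

theorem abs_mul_mul_le_of_abs_le {k b : K} (h : |k| ≤ b) (x y : K) :
    |k * (x * y)| ≤ b * (|x| * |y|) := by
  rw [abs_mul, abs_mul]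
  exact mul_le_mul_of_nonneg_right h (by positivity)

theorem abs_intCast_emod_two_le_one (n : ℤ) : |((n % 2 : ℤ) : K)| ≤ 1 := by
  rcases Int.emod_two_eq n with h | h <;> simp [h]

namespace Matrix

theorem IsSymm.dotProduct_mulVec_fin_three {R : Type*} [CommRing R]
    {A : Matrix (Fin 3) (Fin 3) R} (hA : A.IsSymm) (x : Fin 3 → R) :
    x ⬝ᵥ A *ᵥ x = A 0 0 * x 0 ^ 2 + A 1 1 * x 1 ^ 2 + A 2 2 * x 2 ^ 2
      + 2 * A 0 1 * (x 0 * x 1) + 2 * A 0 2 * (x 0 * x 2) + 2 * A 1 2 * (x 1 * x 2) := by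
  simp only [dotProduct, mulVec, Fin.sum_univ_three, hA.apply 0 1, hA.apply 0 2, hA.apply 1 2]
  ring

theorem IsSymm.det_mul_sq_le {A : Matrix (Fin 3) (Fin 3) K} (hA : A.IsSymm) (hp : 0 < A 0 0)
    (hminor : 0 ≤ A 0 0 * A 1 1 - A 0 1 ^ 2) (x : Fin 3 → K) :
    A.det * x 2 ^ 2 ≤ (A 0 0 * A 1 1 - A 0 1 ^ 2) * (x ⬝ᵥ A *ᵥ x) := by
  rw [det_fin_three, hA.dotProduct_mulVec_fin_three, hA.apply 0 1, hA.apply 0 2, hA.apply 1 2]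
  refine le_of_mul_le_mul_left ?_ hp
  -- Completing the square twice: `A₀₀ (minor · xᵀAx - det A · x₂²)` is the sum of the two
  -- nonnegative terms below.
  linarith [mul_nonneg hminor (sq_nonneg (A 0 0 * x 0 + A 0 1 * x 1 + A 0 2 * x 2)),
    sq_nonneg ((A 0 0 * A 1 1 - A 0 1 ^ 2) * x 1 + (A 0 0 * A 1 2 - A 0 1 * A 0 2) * x 2)]

/-- Minkowski's reduction conditions for the ternary form `Q(x) = xᵀAx`, written out in the
entries of `A`: `Q(eᵢ) ≤ Q(v)` for `v = eᵢ₊₁`, `eⱼ ± eᵢ` and `e₃ ± e₁ ± e₂`. -/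
structure MinkowskiInequalities (A : Matrix (Fin 3) (Fin 3) K) : Prop where
  diag_zero_le_one : A 0 0 ≤ A 1 1
  diag_one_le_two : A 1 1 ≤ A 2 2
  abs_two_mul_01_le : |2 * A 0 1| ≤ A 0 0
  abs_two_mul_02_le : |2 * A 0 2| ≤ A 0 0
  abs_two_mul_12_le : |2 * A 1 2| ≤ A 1 1
  corner_nonneg (ε δ : K) : |ε| = 1 → |δ| = 1 →
    0 ≤ A 0 0 + A 1 1 + 2 * (ε * δ * A 0 1 + ε * A 0 2 + δ * A 1 2)

namespace MinkowskiInequalities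

variable {A : Matrix (Fin 3) (Fin 3) K}

theorem diag_zero_nonneg (hM : A.MinkowskiInequalities) : 0 ≤ A 0 0 :=
  (abs_nonneg _).trans hM.abs_two_mul_01_le

theorem three_mul_sq_le_four_mul_minor (hM : A.MinkowskiInequalities) :
    3 * A 0 0 ^ 2 ≤ 4 * (A 0 0 * A 1 1 - A 0 1 ^ 2) := by
  have h := abs_le.1 hM.abs_two_mul_01_le
  have hsq : (2 * A 0 1) ^ 2 ≤ A 0 0 ^ 2 := sq_le_sq' h.1 h.2
  nlinarith [mul_le_mul_of_nonneg_left hM.diag_zero_le_one hM.diag_zero_nonneg]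

theorem cross_terms_le (hM : A.MinkowskiInequalities) :
    A 1 1 * A 0 2 ^ 2 - 2 * A 0 1 * A 0 2 * A 1 2 + A 0 0 * A 1 2 ^ 2
      ≤ 8 / 9 * A 1 1 * (A 0 0 * A 1 1 - A 0 1 ^ 2) := by
  have hp := hM.diag_zero_nonneg
  have hqp : 0 ≤ A 1 1 - A 0 0 := sub_nonneg.2 hM.diag_zero_le_one
  have h3 : 0 ≤ A 0 0 - 2 * A 0 1 := by linarith [(abs_le.1 hM.abs_two_mul_01_le).2]
  have h4 : 0 ≤ A 0 0 + 2 * A 0 1 := by linarith [(abs_le.1 hM.abs_two_mul_01_le).1]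
  have h5 : 0 ≤ A 0 0 - 2 * A 0 2 := by linarith [(abs_le.1 hM.abs_two_mul_02_le).2]
  have h6 : 0 ≤ A 0 0 + 2 * A 0 2 := by linarith [(abs_le.1 hM.abs_two_mul_02_le).1]
  have h7 : 0 ≤ A 1 1 - 2 * A 1 2 := by linarith [(abs_le.1 hM.abs_two_mul_12_le).2]
  have h8 : 0 ≤ A 1 1 + 2 * A 1 2 := by linarith [(abs_le.1 hM.abs_two_mul_12_le).1]
  have hm1 := hM.corner_nonneg 1 1 (by simp) (by simp)
  have hm2 := hM.corner_nonneg (-1) (-1) (by simp) (by simp)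
  have hm3 := hM.corner_nonneg 1 (-1) (by simp) (by simp)
  have hm4 := hM.corner_nonneg (-1) 1 (by simp) (by simp)
  -- A Positivstellensatz certificate: a nonnegative combination of triple products of the
  -- reduction conditions.
  linarith [mul_nonneg (mul_nonneg hp hp) hqp, mul_nonneg (mul_nonneg hp h4) h8,
    mul_nonneg (mul_nonneg hp h6) hm4, mul_nonneg (mul_nonneg hp h6) h8,
    mul_nonneg (mul_nonneg hp h7) h8, mul_nonneg (mul_nonneg hp hqp) h4,
    mul_nonneg (mul_nonneg hp hqp) h6, mul_nonneg (mul_nonneg hp hqp) hqp,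
    mul_nonneg (mul_nonneg h4 h4) hm4, mul_nonneg (mul_nonneg h4 h6) h8,
    mul_nonneg (mul_nonneg h4 h5) hm3, mul_nonneg (mul_nonneg h4 h5) h6,
    mul_nonneg (mul_nonneg h4 h5) h7, mul_nonneg (mul_nonneg h3 h4) h8,
    mul_nonneg (mul_nonneg h3 h6) hm2, mul_nonneg (mul_nonneg h3 h3) h4,
    mul_nonneg (mul_nonneg h3 h5) hm1, mul_nonneg (mul_nonneg h3 h5) h8,
    mul_nonneg (mul_nonneg hqp h3) h4, mul_nonneg (mul_nonneg hqp h3) h5,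
    mul_nonneg (mul_nonneg hqp h5) h6]

theorem minor_mul_le_nine_mul_det (hA : A.IsSymm) (hM : A.MinkowskiInequalities) :
    A 2 2 * (A 0 0 * A 1 1 - A 0 1 ^ 2) ≤ 9 * A.det := by
  have hminor : 0 ≤ A 0 0 * A 1 1 - A 0 1 ^ 2 := by
    nlinarith [hM.three_mul_sq_le_four_mul_minor, sq_nonneg (A 0 0)]
  rw [det_fin_three, hA.apply 0 1, hA.apply 0 2, hA.apply 1 2]
  nlinarith [hM.cross_terms_le, mul_le_mul_of_nonneg_right hM.diag_one_le_two hminor]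

theorem nine_mul_le_of_nine_le_abs (hA : A.IsSymm) (hM : A.MinkowskiInequalities)
    (hp : 0 < A 0 0) (x : Fin 3 → K) (hx : 9 ≤ |x 2|) : 9 * A 2 2 ≤ x ⬝ᵥ A *ᵥ x := by
  have hminor : 0 < A 0 0 * A 1 1 - A 0 1 ^ 2 := by
    nlinarith [hM.three_mul_sq_le_four_mul_minor, pow_pos hp 2]
  have hx2 : 81 ≤ x 2 ^ 2 := by nlinarith [sq_abs (x 2)]
  have hc : 0 ≤ A 2 2 := hp.le.trans (hM.diag_zero_le_one.trans hM.diag_one_le_two)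
  have hdet := hM.minor_mul_le_nine_mul_det hA
  refine le_of_mul_le_mul_left ?_ hminor
  calc (A 0 0 * A 1 1 - A 0 1 ^ 2) * (9 * A 2 2)
      = A 2 2 * (A 0 0 * A 1 1 - A 0 1 ^ 2) / 9 * 81 := by ring
    _ ≤ A.det * x 2 ^ 2 :=
        mul_le_mul (by linarith) hx2 (by norm_num) (by nlinarith [mul_nonneg hc hminor.le])
    _ ≤ _ := hA.det_mul_sq_le hp hminor.le x

theorem le_six_mul_of_abs_le_one (hA : A.IsSymm) (hM : A.MinkowskiInequalities)
    (x : Fin 3 → K) (hx : ∀ i, |x i| ≤ 1) : x ⬝ᵥ A *ᵥ x ≤ 6 * A 2 2 := by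
  have hp := hM.diag_zero_nonneg
  have hq : 0 ≤ A 1 1 := hp.trans hM.diag_zero_le_one
  have hc : 0 ≤ A 2 2 := hq.trans hM.diag_one_le_two
  have hsq i : x i ^ 2 ≤ 1 := (sq_le_one_iff_abs_le_one _).2 (hx i)
  have hprod i j : |x i| * |x j| ≤ 1 := mul_le_one₀ (hx i) (abs_nonneg _) (hx j)
  rw [hA.dotProduct_mulVec_fin_three]
  linarith [(abs_le.1 (abs_mul_mul_le_of_abs_le hM.abs_two_mul_01_le (x 0) (x 1))).2,
    (abs_le.1 (abs_mul_mul_le_of_abs_le hM.abs_two_mul_02_le (x 0) (x 2))).2,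
    (abs_le.1 (abs_mul_mul_le_of_abs_le hM.abs_two_mul_12_le (x 1) (x 2))).2,
    mul_le_mul_of_nonneg_left (hsq 0) hp, mul_le_mul_of_nonneg_left (hsq 1) hq,
    mul_le_mul_of_nonneg_left (hsq 2) hc, mul_le_mul_of_nonneg_left (hprod 0 1) hp,
    mul_le_mul_of_nonneg_left (hprod 0 2) hp, mul_le_mul_of_nonneg_left (hprod 1 2) hq,
    hM.diag_zero_le_one, hM.diag_one_le_two]

theorem seven_mul_le_sub (hA : A.IsSymm) (hM : A.MinkowskiInequalities) (x z : Fin 3 → K)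
    (hx1 : 22 ≤ |x 1|) (hx2 : |x 2| ≤ 8) (hz0 : |z 0| ≤ 1) (hz1 : |z 1| ≤ 1) (hz2 : z 2 = x 2) :
    7 * A 1 1 ≤ x ⬝ᵥ A *ᵥ x - z ⬝ᵥ A *ᵥ z := by
  have hp := hM.diag_zero_nonneg
  have hpq : A 0 0 ≤ A 1 1 := hM.diag_zero_le_one
  have hq : 0 ≤ A 1 1 := hp.trans hpq
  have bound {k b : K} (h : |k| ≤ b) (u v : K) := abs_le.1 (abs_mul_mul_le_of_abs_le h u v)
  have h01 := (bound hM.abs_two_mul_01_le (x 0) (x 1)).1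
  have h02 := (bound hM.abs_two_mul_02_le (x 0) (x 2)).1
  have h12 := (bound hM.abs_two_mul_12_le (x 1) (x 2)).1
  have h01' := (bound hM.abs_two_mul_01_le (z 0) (z 1)).2
  have h02' := (bound hM.abs_two_mul_02_le (z 0) (x 2)).2
  have h12' := (bound hM.abs_two_mul_12_le (z 1) (x 2)).2
  have hU := abs_nonneg (x 0)
  have hW := abs_nonneg (x 2)
  have hZ₀ := abs_nonneg (z 0)
  have hZ₁ := abs_nonneg (z 1)
  rw [hA.dotProduct_mulVec_fin_three, hA.dotProduct_mulVec_fin_three, hz2,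
    ← sq_abs (x 0), ← sq_abs (x 1), ← sq_abs (z 0), ← sq_abs (z 1)]
  generalize |x 0| = U at *
  generalize |x 1| = V at *
  generalize |x 2| = W at *
  generalize |z 0| = Z₀ at *
  generalize |z 1| = Z₁ at *
  -- Once `Z₀, Z₁ ≤ 1` and `W ≤ 8` are used, what remains follows from `(2U - V - 8)² ≥ 0`,
  -- `(V - 22)(V + 6) ≥ 0` and `(V - 22)(V + 14) ≥ 0`, weighted by `A₀₀`, `A₀₀` and `A₁₁ - A₀₀`.
  linarith [mul_nonneg (sub_nonneg.2 hpq)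
      (mul_nonneg (by linarith : (0:K) ≤ V - 22) (by linarith : (0:K) ≤ V + 14)),
    mul_nonneg hp (sq_nonneg (2 * U - V - 8)),
    mul_nonneg hp (mul_nonneg (by linarith : (0:K) ≤ V - 22) (by linarith : (0:K) ≤ V + 6)),
    mul_nonneg hp (by linarith : (0:K) ≤ 8 - W), mul_nonneg hq (by linarith : (0:K) ≤ 8 - W),
    mul_nonneg (mul_nonneg hp hU) (by linarith : (0:K) ≤ 8 - W),
    mul_nonneg (mul_nonneg hq (by linarith : (0:K) ≤ V)) (by linarith : (0:K) ≤ 8 - W),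
    mul_nonneg (mul_nonneg hp (by linarith : (0:K) ≤ 1 - Z₀)) hW,
    mul_nonneg (mul_nonneg hq (by linarith : (0:K) ≤ 1 - Z₁)) hW,
    mul_nonneg (mul_nonneg hp hZ₀) (by linarith : (0:K) ≤ 1 - Z₁),
    mul_nonneg hp (by linarith : (0:K) ≤ 1 - Z₀),
    mul_nonneg hq (mul_nonneg (by linarith : (0:K) ≤ 1 - Z₁) (by linarith : (0:K) ≤ 1 + Z₁)),
    mul_nonneg hp (mul_nonneg (by linarith : (0:K) ≤ 1 - Z₀) (by linarith : (0:K) ≤ 1 + Z₀))]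

end MinkowskiInequalities

end Matrix

end OrderedField

namespace QuadPoly3

theorem evalQ_add_add_evalQ_sub (f : QuadPoly3) (x y : Fin 3 → ℚ) :
    f.evalQ (x + y) + f.evalQ (x - y) = 2 * (f.evalQ x + f.evalQ y) := by
  simp only [evalQ, mulVec_add, mulVec_sub, add_dotProduct, sub_dotProduct, dotProduct_add,
    dotProduct_sub]
  ring

variable {f : QuadPoly3}

theorem MinkowskiReducedQ.minkowskiInequalities (hM : f.MinkowskiReducedQ) :
    f.A.MinkowskiInequalities := by
  have key (i : Fin 3) (x₀ x₁ x₂ : ℤ)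
      (hx : (Finset.univ.filter fun j => i ≤ j).gcd ![x₀, x₁, x₂] = 1) :=
    (hM i _ hx).trans_eq (f.hA.dotProduct_mulVec_fin_three _)
  have he₁ := key 0 0 1 0 (by decide)
  have he₂ := key 1 0 0 1 (by decide)
  have h01 := key 1 1 1 0 (by decide)
  have h01' := key 1 (-1) 1 0 (by decide)
  have h02 := key 2 1 0 1 (by decide)
  have h02' := key 2 (-1) 0 1 (by decide)
  have h12 := key 2 0 1 1 (by decide)
  have h12' := key 2 0 (-1) 1 (by decide)
  have hpp := key 2 1 1 1 (by decide)
  have hpm := key 2 1 (-1) 1 (by decide)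
  have hmp := key 2 (-1) 1 1 (by decide)
  have hmm := key 2 (-1) (-1) 1 (by decide)
  simp only [cons_val_zero, cons_val_one, cons_val, Int.cast_zero, Int.cast_one, Int.cast_neg]
    at he₁ he₂ h01 h01' h02 h02' h12 h12' hpp hpm hmp hmm
  refine ⟨by linarith, by linarith, abs_le.2 ⟨by linarith, by linarith⟩,
    abs_le.2 ⟨by linarith, by linarith⟩, abs_le.2 ⟨by linarith, by linarith⟩, ?_⟩
  intro ε δ hε hδ
  rcases abs_eq zero_le_one |>.1 hε with rfl | rfl <;>
    rcases abs_eq zero_le_one |>.1 hδ with rfl | rfl <;> linarith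

theorem Reduced.neg_evalQ_le (hred : f.Reduced) (y : Fin 3 → ℤ) :
    -f.evalQ (fun i => (y i : ℚ)) ≤ f.b ⬝ᵥ fun i => (y i : ℚ) := by
  have h := hred.2 y
  simp only [eval, evalQ, mulVec_zero, dotProduct_zero, zero_add] at h ⊢
  linarith

theorem Reduced.abs_b_le (hred : f.Reduced) (i : Fin 3) : |f.b i| ≤ f.A i i := by
  have hsingle (c : ℤ) : (fun j => ((Pi.single i c : Fin 3 → ℤ) j : ℚ)) = Pi.single i (c : ℚ) := by
    ext j; rcases eq_or_ne j i with rfl | hj <;> simp [*]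
  have h₁ := hred.neg_evalQ_le (Pi.single i 1)
  have h₂ := hred.neg_evalQ_le (Pi.single i (-1))
  rw [hsingle] at h₁ h₂
  simp only [evalQ, mulVec_single, single_dotProduct, dotProduct_single, col_apply, Int.cast_one,
    Int.cast_neg, MulOpposite.op_one, MulOpposite.op_neg, one_smul, neg_smul, one_mul, mul_one,
    dotProduct_neg, neg_mul, mul_neg, neg_neg] at h₁ h₂
  exact abs_le.2 ⟨by linarith, by linarith⟩

theorem evalQ_sub_evalQ_le_two_mul_eval (hf : ∀ x : Fin 3 → ℤ, 0 ≤ f.eval fun i => (x i : ℚ))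
    (hred : f.Reduced) {a z : Fin 3 → ℤ} (h : ∀ i, a i ≡ z i [ZMOD 2]) :
    f.evalQ (fun i => (a i : ℚ)) - f.evalQ (fun i => (z i : ℚ))
      ≤ 2 * f.eval fun i => (a i : ℚ) := by
  choose k hk using fun i => (h i).dvd
  set w : Fin 3 → ℚ := fun i => ((a + k) i : ℚ)
  set y : Fin 3 → ℚ := fun i => ((-k) i : ℚ)
  have ha : (fun i => (a i : ℚ)) = w + y := by ext i; simp [w, y]
  have hz : (fun i => (z i : ℚ)) = w - y := by
    ext i
    simp only [w, y, Pi.add_apply, Pi.neg_apply, Int.cast_add, Int.cast_neg, Pi.sub_apply,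
      sub_neg_eq_add]
    exact_mod_cast (by linarith [hk i] : z i = a i + k i + k i)
  have hw : 0 ≤ f.evalQ w + f.b ⬝ᵥ w + f.m := hf (a + k)
  have hy : -f.evalQ y ≤ f.b ⬝ᵥ y := hred.neg_evalQ_le (-k)
  have hpar := f.evalQ_add_add_evalQ_sub w y
  rw [ha, hz]
  show f.evalQ (w + y) - f.evalQ (w - y) ≤ 2 * (f.evalQ (w + y) + f.b ⬝ᵥ (w + y) + f.m)
  rw [dotProduct_add]
  linarith

theorem three_halves_mul_le_eval (hpos : f.Positive) (hred : f.Reduced) (a : Fin 3 → ℤ)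
    (h2 : 9 ≤ |a 2|) : 3 / 2 * f.A 2 2 ≤ f.eval fun i => (a i : ℚ) := by
  have hM := hred.1.minkowskiInequalities
  have hsub := evalQ_sub_evalQ_le_two_mul_eval hpos.2 hred (z := fun i => a i % 2)
    fun i => (Int.mod_modEq _ _).symm
  have h9 := hM.nine_mul_le_of_nine_le_abs f.hA hpos.1.diag_pos (fun i => (a i : ℚ))
    (by exact_mod_cast h2)
  have h6 := hM.le_six_mul_of_abs_le_one f.hA (fun i => ((a i % 2 : ℤ) : ℚ))
    fun i => abs_intCast_emod_two_le_one _
  unfold evalQ at hsub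
  linarith

theorem seven_halves_mul_le_eval (hf : ∀ x : Fin 3 → ℤ, 0 ≤ f.eval fun i => (x i : ℚ))
    (hred : f.Reduced) (a : Fin 3 → ℤ) (h1 : 22 ≤ |a 1|) (h2 : |a 2| ≤ 8) :
    7 / 2 * f.A 1 1 ≤ f.eval fun i => (a i : ℚ) := by
  have hsub := evalQ_sub_evalQ_le_two_mul_eval hf hred (a := a) (z := ![a 0 % 2, a 1 % 2, a 2])
    fun i => by fin_cases i <;> simp [(Int.mod_modEq _ _).symm]
  have h7 := hred.1.minkowskiInequalities.seven_mul_le_sub f.hA (fun i => (a i : ℚ))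
    (fun i => ((![a 0 % 2, a 1 % 2, a 2] i : ℤ) : ℚ)) (by exact_mod_cast h1)
    (by exact_mod_cast h2) (abs_intCast_emod_two_le_one _) (abs_intCast_emod_two_le_one _) rfl
  unfold evalQ at hsub
  linarith

theorem thirty_one_mul_le_eval (hf : ∀ x : Fin 3 → ℤ, 0 ≤ f.eval fun i => (x i : ℚ))
    (hred : f.Reduced) (a : Fin 3 → ℤ) (h0 : 31 ≤ |a 0|) (h1 : |a 1| ≤ 21) (h2 : |a 2| ≤ 8) :
    31 * f.A 0 0 ≤ f.eval fun i => (a i : ℚ) := by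
  have hM := hred.1.minkowskiInequalities
  have hp := hM.diag_zero_nonneg
  have hrest := hf ![0, a 1, a 2]
  have hb := (abs_le.1 ((abs_mul _ _).trans_le
    (mul_le_mul_of_nonneg_right (hred.abs_b_le 0) (abs_nonneg (a 0 : ℚ))))).1
  rw [eval, f.hA.dotProduct_mulVec_fin_three, ← sq_abs (a 0 : ℚ)]
  rw [eval, f.hA.dotProduct_mulVec_fin_three] at hrest
  simp only [dotProduct, Fin.sum_univ_three, cons_val_zero, cons_val_one, cons_val,
    Int.cast_zero] at hrest ⊢
  have hU : (31 : ℚ) ≤ |(a 0 : ℚ)| := by exact_mod_cast h0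
  have hV : |(a 1 : ℚ)| ≤ 21 := by exact_mod_cast h1
  have hW : |(a 2 : ℚ)| ≤ 8 := by exact_mod_cast h2
  linarith [(abs_le.1 (abs_mul_mul_le_of_abs_le hM.abs_two_mul_01_le (a 0 : ℚ) (a 1))).1,
    (abs_le.1 (abs_mul_mul_le_of_abs_le hM.abs_two_mul_02_le (a 0 : ℚ) (a 2))).1,
    mul_nonneg hp (mul_nonneg (by linarith : (0 : ℚ) ≤ |(a 0 : ℚ)| - 31)
      (by linarith : (0 : ℚ) ≤ |(a 0 : ℚ)| + 1)),
    mul_nonneg (mul_nonneg hp (abs_nonneg (a 0 : ℚ)))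
      (by linarith : (0 : ℚ) ≤ 21 - |(a 1 : ℚ)|),
    mul_nonneg (mul_nonneg hp (abs_nonneg (a 0 : ℚ)))
      (by linarith : (0 : ℚ) ≤ 8 - |(a 2 : ℚ)|)]

end QuadPoly3

/-- Let `f` be a positive reduced ternary quadratic polynomial with
successive minima `μ₁ = A 0 0, μ₂ = A 1 1, μ₃ = A 2 2` of its quadratic part, and let
`a = (a₁, a₂, a₃) ∈ ℤ³`.  If it is not the case that `|a₁| ≤ 30`, `|a₂| ≤ 21` and `|a₃| ≤ 8`,
then `f(a) ≥ min {(3/2)μ₃, (7/2)μ₂, 31μ₁}`. -/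
theorem stmt_5 (f : QuadPoly3) (hpos : f.Positive) (hred : f.Reduced) (a : Fin 3 → ℤ)
    (h : ¬ (|a 0| ≤ 30 ∧ |a 1| ≤ 21 ∧ |a 2| ≤ 8)) :
    min (min ((3 / 2 : ℚ) * f.A 2 2) ((7 / 2 : ℚ) * f.A 1 1)) ((31 : ℚ) * f.A 0 0)
      ≤ f.eval (fun i => (a i : ℚ)) := by
  rw [min_le_iff, min_le_iff]
  rcases le_or_gt 9 |a 2| with h2 | h2
  · exact .inl (.inl (f.three_halves_mul_le_eval hpos hred a h2))
  rcases le_or_gt 22 |a 1| with h1 | h1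
  · exact .inl (.inr (f.seven_halves_mul_le_eval hpos.2 hred a h1 (by omega)))
  · exact .inr (f.thirty_one_mul_le_eval hpos.2 hred a (by omega) (by omega) (by omega))
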